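/- Let Σ̂ be an n×n real symmetric positive definite matrix and suppose 0 < δ < δ_max(Σ̂) := log det( dd(Σ̂⁻¹)·Σ̂ ). If (λ*, X*) ∈ C_F satisfies F(λ*, X*) ≤ F(λ, X) for all (λ, X) ∈ C_F, then the matrix I − X* is singular, i.e. det(I − X*) = 0; in other words, every minimizer of F over C_F lies on the boundary of the constraint X ⪯ I. -/

import Mathlib

/-- `dd M`: the diagonal matrix with the same diagonal as `M`. -/
def dd {n : ℕ} (M : Matrix (Fin n) (Fin n) ℝ) : Matrix (Fin n) (Fin n) ℝ :=
  Matrix.diagonal fun i => M i i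

/-- `F(λ,X) := −λ(log det(Ŝ⁻¹ + λ⁻¹X) + log det Ŝ − δ)`. -/
noncomputable def Fobj {n : ℕ} (S : Matrix (Fin n) (Fin n) ℝ) (δ : ℝ)
    (l : ℝ) (X : Matrix (Fin n) (Fin n) ℝ) : ℝ :=
  -(l * (Real.log ((S⁻¹ + l⁻¹ • X).det) + Real.log S.det - δ))

/-- The constraint set `C_F`: `λ > 0`, `X` symmetric, `X ⪯ I`, `dd(X) ⪯ 0`,
`Ŝ⁻¹ + λ⁻¹X ≻ 0`. -/
def CF {n : ℕ} (S : Matrix (Fin n) (Fin n) ℝ)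
    (l : ℝ) (X : Matrix (Fin n) (Fin n) ℝ) : Prop :=
  0 < l ∧ X.IsSymm ∧ (1 - X).PosSemidef ∧ (-(dd X)).PosSemidef ∧
    (S⁻¹ + l⁻¹ • X).PosDef

/-!
The minimum value of `F` is negative: at `λ = t`, `X = t (dd(Σ̂⁻¹) − Σ̂⁻¹)`, which is feasible for
small `t > 0`, one has `Σ̂⁻¹ + λ⁻¹X = dd(Σ̂⁻¹)` and `F = −t (δ_max − δ) < 0`. On the other hand
`F(sλ, sX) = s F(λ, X)`, and if `I − X*` were nonsingular, hence positive definite, the minimizer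
could be scaled by some `s > 1` while staying in `C_F`, forcing `F(λ*, X*) ≥ s F(λ*, X*)`, i.e.
`F(λ*, X*) ≥ 0`. Both feasibility claims are instances of `B − εM ⪰ 0` for `B ≻ 0`, `M`
symmetric and `ε > 0` small.
-/

namespace Matrix

open scoped MatrixOrder ComplexOrder

variable {𝕜 n : Type*} [RCLike 𝕜] [Fintype n] [DecidableEq n]

lemma PosDef.exists_pos_posSemidef_sub_smul {B M : Matrix n n 𝕜} (hB : B.PosDef)
    (hM : M.IsHermitian) : ∃ ε : ℝ, 0 < ε ∧ (B - ε • M).PosSemidef := by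
  cases isEmpty_or_nonempty n
  · exact ⟨1, one_pos, Subsingleton.elim 0 (B - (1 : ℝ) • M) ▸ .zero⟩
  obtain ⟨r, hr, hrB⟩ := (CFC.exists_pos_algebraMap_le_iff hB.isHermitian.isSelfAdjoint).2
    fun x hx => hB.isStrictlyPositive.spectrum_pos hx
  obtain ⟨R, hR⟩ : BddAbove (spectrum ℝ M) :=
    hM.spectrum_real_eq_range_eigenvalues ▸ (Set.finite_range _).bddAbove
  have hMR : M ≤ algebraMap ℝ _ (max R 1) :=
    le_algebraMap_of_spectrum_le (fun x hx => (hR hx).trans (le_max_left R 1))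
      hM.isSelfAdjoint
  have hR1 : 0 < max R 1 := lt_max_of_lt_right one_pos
  refine ⟨r / max R 1, by positivity, ?_⟩
  have hsplit : B - (r / max R 1) • M
      = (B - algebraMap ℝ _ r) + (r / max R 1) • (algebraMap ℝ _ (max R 1) - M) := by
    simp only [Algebra.algebraMap_eq_smul_one, smul_sub, smul_smul, div_mul_cancel₀ r hR1.ne']
    abel
  rw [hsplit]
  exact (le_iff.mp hrB).add ((le_iff.mp hMR).smul (by positivity))

end Matrix

section

variable {n : ℕ}

lemma dd_smul (c : ℝ) (M : Matrix (Fin n) (Fin n) ℝ) : dd (c • M) = c • dd M := by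
  simp [dd, ← Matrix.diagonal_smul]

lemma dd_dd_sub_self (M : Matrix (Fin n) (Fin n) ℝ) : dd (dd M - M) = 0 := by
  simp [dd]

lemma Matrix.PosDef.dd {A : Matrix (Fin n) (Fin n) ℝ} (hA : A.PosDef) : (dd A).PosDef :=
  .diagonal fun _ => hA.diag_pos

lemma Fobj_mul_smul (S : Matrix (Fin n) (Fin n) ℝ) (δ l : ℝ) (X : Matrix (Fin n) (Fin n) ℝ)
    {s : ℝ} (hs : s ≠ 0) : Fobj S δ (s * l) (s • X) = s * Fobj S δ l X := by
  rw [Fobj, Fobj, smul_smul, mul_inv_rev, inv_mul_cancel_right₀ hs]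
  ring

lemma CF.mul_smul {S : Matrix (Fin n) (Fin n) ℝ} {l : ℝ} {X : Matrix (Fin n) (Fin n) ℝ}
    (h : CF S l X) {s : ℝ} (hs : 0 < s) (hsX : (1 - s • X).PosSemidef) :
    CF S (s * l) (s • X) := by
  obtain ⟨hl, hX, -, hddX, hA⟩ := h
  refine ⟨mul_pos hs hl, hX.smul s, hsX, ?_, ?_⟩
  · rw [dd_smul, ← smul_neg]
    exact hddX.smul hs.le
  · rwa [smul_smul, mul_inv_rev, inv_mul_cancel_right₀ hs.ne']

lemma CF_smul_dd_inv_sub_inv {S : Matrix (Fin n) (Fin n) ℝ} (hS : S.PosDef) {t : ℝ} (ht : 0 < t)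
    (h : (1 - t • (dd S⁻¹ - S⁻¹)).PosSemidef) : CF S t (t • (dd S⁻¹ - S⁻¹)) := by
  refine ⟨ht, ?_, h, ?_, ?_⟩
  · exact ((Matrix.isSymm_diagonal _).sub
      (Matrix.isHermitian_iff_isSymm.mp hS.inv.isHermitian)).smul t
  · rw [dd_smul, dd_dd_sub_self, smul_zero, neg_zero]
    exact .zero
  · rw [inv_smul_smul₀ ht.ne', add_sub_cancel]
    exact hS.inv.dd

lemma Fobj_smul_dd_inv_sub_inv {S : Matrix (Fin n) (Fin n) ℝ} (hS : S.PosDef) (δ : ℝ) {t : ℝ}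
    (ht : t ≠ 0) :
    Fobj S δ t (t • (dd S⁻¹ - S⁻¹)) = -(t * (Real.log (dd S⁻¹ * S).det - δ)) := by
  rw [Fobj, inv_smul_smul₀ ht, add_sub_cancel, Matrix.det_mul,
    Real.log_mul hS.inv.dd.det_pos.ne' hS.det_pos.ne']

lemma exists_CF_Fobj_neg {S : Matrix (Fin n) (Fin n) ℝ} (hS : S.PosDef) {δ : ℝ}
    (hδmax : δ < Real.log (dd S⁻¹ * S).det) : ∃ l X, CF S l X ∧ Fobj S δ l X < 0 := by
  have hM : (dd S⁻¹ - S⁻¹).IsHermitian :=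
    (Matrix.isHermitian_diagonal _).sub hS.inv.isHermitian
  obtain ⟨t, ht, h⟩ := Matrix.PosDef.one.exists_pos_posSemidef_sub_smul hM
  refine ⟨t, _, CF_smul_dd_inv_sub_inv hS ht h, ?_⟩
  rw [Fobj_smul_dd_inv_sub_inv hS δ ht.ne', neg_lt_zero]
  exact mul_pos ht (sub_pos.mpr hδmax)

lemma Fobj_nonneg_of_det_one_sub_ne_zero {S : Matrix (Fin n) (Fin n) ℝ} {δ l : ℝ}
    {X : Matrix (Fin n) (Fin n) ℝ} (hmem : CF S l X)
    (hmin : ∀ l' X', CF S l' X' → Fobj S δ l X ≤ Fobj S δ l' X')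
    (hdet : (1 - X).det ≠ 0) : 0 ≤ Fobj S δ l X := by
  have ⟨_, hX, hIX, _⟩ := hmem
  obtain ⟨ε, hε, hεX⟩ := (hIX.posDef_iff_det_ne_zero.mpr hdet).exists_pos_posSemidef_sub_smul
    (Matrix.isHermitian_iff_isSymm.mpr hX)
  have hscaled : 1 - (1 + ε) • X = 1 - X - ε • X := by
    rw [add_smul, one_smul]
    abel
  have h := hmin _ _ (hmem.mul_smul (by positivity) (hscaled ▸ hεX))
  rw [Fobj_mul_smul S δ l X (by positivity)] at h
  nlinarith

end

theorem stmt15 {n : ℕ} (S : Matrix (Fin n) (Fin n) ℝ) (hS : S.PosDef)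
    (δ : ℝ) (hδmax : δ < Real.log ((dd S⁻¹ * S).det))
    (l : ℝ) (X : Matrix (Fin n) (Fin n) ℝ) (hmem : CF S l X)
    (hmin : ∀ l' X', CF S l' X' → Fobj S δ l X ≤ Fobj S δ l' X') :
    (1 - X).det = 0 := by
  by_contra hdet
  obtain ⟨l₀, X₀, hmem₀, hneg⟩ := exists_CF_Fobj_neg hS hδmax
  linarith [hmin l₀ X₀ hmem₀, Fobj_nonneg_of_det_one_sub_ne_zero hmem hmin hdet]
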